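/- For n ≥ 1, the polynomial w_n(x) defined by w_0 = 3, w_1 = 0, w_2 = 2x, w_n = x·w_{n-2} + w_{n-3}, satisfies w_n(x) = Σ_{3j ≤ 2n} (n/(n-j))·C(n-j, 2n-3j)·x^{2n-3j}. -/

import Mathlib

/-- `w_n(x)`: `w_0 = 3`, `w_1 = 0`, `w_2 = 2x`, `w_n = x·w_{n-2} + w_{n-3}`. -/
def wpoly {R : Type*} [CommRing R] (x : R) : ℕ → R
  | 0 => 3
  | 1 => 0
  | 2 => 2 * x
  | n + 3 => x * wpoly x (n + 1) + wpoly x n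

open Polynomial Finset

noncomputable def gterm (n j : ℕ) : Polynomial ℚ :=
  if 3 * j ≤ 2 * n then
    Polynomial.C (((n : ℚ) / ((n : ℚ) - (j : ℚ))) * (Nat.choose (n - j) (2 * n - 3 * j) : ℚ)) *
      X ^ (2 * n - 3 * j)
  else 0

lemma qhelp (d s : ℕ) : ((s:ℚ)+1) * (d.choose (s+1)) = ((d:ℚ) - s) * d.choose s := by
  have h := Nat.add_one_mul_choose_eq d s
  have h2 := Nat.choose_succ_succ d s
  have h3 := congrArg (Nat.cast : ℕ → ℚ) h
  rw [h2] at h3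
  push_cast at h3
  linarith

lemma gterm_rec (n j : ℕ) (hn : 1 ≤ n) :
    gterm (n + 3) (j + 2) = X * gterm (n + 1) (j + 1) + gterm n j := by
  rcases lt_trichotomy (3 * j) (2 * n) with h | h | h
  · -- all three terms active
    have hjn : j + 1 ≤ n := by omega
    rw [gterm, if_pos (by omega), gterm, if_pos (by omega), gterm, if_pos (by omega)]
    obtain ⟨s, hs⟩ : ∃ s, 2 * n - 3 * j = s + 1 := ⟨2*n - 3*j - 1, by omega⟩
    have e1 : 2 * (n + 3) - 3 * (j + 2) = s + 1 := by omega
    have e2 : 2 * (n + 1) - 3 * (j + 1) = s := by omega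
    have e3 : (n + 3) - (j + 2) = (n - j) + 1 := by omega
    have e4 : (n + 1) - (j + 1) = n - j := by omega
    rw [e1, e2, e3, e4, hs]
    have hdq : (0:ℚ) < ((n-j:ℕ):ℚ) := by
      have : (1:ℕ) ≤ n - j := by omega
      exact_mod_cast this
    have hnj : ((n-j:ℕ):ℚ) = (n:ℚ) - (j:ℚ) := Nat.cast_sub (show j ≤ n by omega)
    have hsn : (s:ℚ) = 2*(n:ℚ) - 3*(j:ℚ) - 1 := by
      have : (2*n - 3*j : ℕ) = s + 1 := hs
      have h2 : ((2*n - 3*j : ℕ):ℚ) = (s:ℚ) + 1 := by exact_mod_cast this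
      rw [Nat.cast_sub (show 3*j ≤ 2*n by omega)] at h2
      push_cast at h2; linarith
    have key : ((n:ℚ)+3) / (((n:ℚ)+3) - ((j:ℚ)+2)) * (((n-j)+1).choose (s+1) : ℚ)
        = ((n:ℚ)+1) / (((n:ℚ)+1) - ((j:ℚ)+1)) * ((n-j).choose s : ℚ)
          + (n:ℚ) / ((n:ℚ) - (j:ℚ)) * ((n-j).choose (s+1) : ℚ) := by
      have pascal : (((n-j)+1).choose (s+1) : ℚ) = ((n-j).choose s : ℚ) + ((n-j).choose (s+1) : ℚ) := by
        rw [Nat.choose_succ_succ]; push_cast; ring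
      have hq := qhelp (n-j) s
      rw [hnj] at hq hdq
      rw [pascal]
      have d1 : (n:ℚ) - (j:ℚ) ≠ 0 := ne_of_gt hdq
      have d2 : ((n:ℚ)+3) - ((j:ℚ)+2) ≠ 0 := by intro hc; apply d1; linarith
      have d3 : ((n:ℚ)+1) - ((j:ℚ)+1) ≠ 0 := by intro hc; apply d1; linarith
      have hq' : (2*(n:ℚ) - 3*(j:ℚ)) * ((n-j).choose (s+1) : ℚ)
          = (1 - (n:ℚ) + 2*(j:ℚ)) * ((n-j).choose s : ℚ) := by
        rw [hsn] at hq; linear_combination hq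
      field_simp
      linear_combination ((n:ℚ) - (j:ℚ)) * hq' 
    push_cast
    rw [key]
    rw [map_add, add_mul]
    ring
  · -- 3j = 2n : middle term vanishes
    rw [gterm, if_pos (by omega), gterm, if_neg (by omega), gterm, if_pos (by omega)]
    have e1 : 2 * (n + 3) - 3 * (j + 2) = 0 := by omega
    have e2 : 2 * n - 3 * j = 0 := by omega
    have e3 : (n + 3) - (j + 2) = (n - j) + 1 := by omega
    rw [e1, e2, e3]
    simp only [Nat.choose_zero_right, pow_zero, mul_one, Nat.cast_one, mul_zero, zero_add]
    congr 1
    have h3j : (3:ℚ) * (j:ℚ) = 2 * (n:ℚ) := by exact_mod_cast h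
    have hpos : (0:ℚ) < (n:ℚ) - (j:ℚ) := by
      have hj : j < n := by omega
      have := (Nat.cast_lt (α:=ℚ)).2 hj; linarith
    push_cast
    have d1 : (n:ℚ) - (j:ℚ) ≠ 0 := ne_of_gt hpos
    have d2 : ((n:ℚ)+3) - ((j:ℚ)+2) ≠ 0 := by intro hc; apply d1; linarith
    field_simp
    linear_combination -h3j
  · rw [gterm, if_neg (by omega), gterm, if_neg (by omega), gterm, if_neg (by omega)]
    simp

lemma gterm_zero (n : ℕ) (hn : 1 ≤ n) : gterm n 0 = 0 := by
  rw [gterm, if_pos (by omega), Nat.choose_eq_zero_of_lt (by omega)]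
  simp

lemma gterm_one (n : ℕ) : gterm (n + 3) 1 = 0 := by
  rw [gterm, if_pos (by omega), Nat.choose_eq_zero_of_lt (by omega)]
  simp

lemma sum_eq_gsum (n N : ℕ) (hN : 2 * n / 3 + 1 ≤ N) :
    (∑ j ∈ Finset.range (2 * n / 3 + 1),
        Polynomial.C (((n : ℚ) / ((n : ℚ) - (j : ℚ))) * (Nat.choose (n - j) (2 * n - 3 * j) : ℚ)) *
          X ^ (2 * n - 3 * j))
      = ∑ j ∈ Finset.range N, gterm n j := by
  trans (∑ j ∈ Finset.range (2 * n / 3 + 1), gterm n j)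
  · refine Finset.sum_congr rfl (fun j hj => ?_)
    simp only [Finset.mem_range] at hj
    rw [gterm, if_pos (by omega)]
  · refine Finset.sum_subset (Finset.range_subset_range.2 hN) (fun j _ hj => ?_)
    simp only [Finset.mem_range, not_lt] at hj
    rw [gterm, if_neg (by omega)]

open Polynomial in
/-- For `n ≥ 1`, `w_n(x) = Σ_{3j ≤ 2n} (n/(n-j))·C(n-j, 2n-3j)·x^{2n-3j}` (in `ℚ[x]`). -/
theorem wpoly_explicit (n : ℕ) (hn : 1 ≤ n) :
    wpoly (X : Polynomial ℚ) n =
      ∑ j ∈ Finset.range (2 * n / 3 + 1),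
        Polynomial.C (((n : ℚ) / ((n : ℚ) - (j : ℚ))) * (Nat.choose (n - j) (2 * n - 3 * j) : ℚ)) *
          X ^ (2 * n - 3 * j) := by
  induction n using Nat.strong_induction_on with
  | _ n ih =>
    match n, hn with
    | 1, _ =>
      simp [wpoly, Finset.sum_range_succ]
    | 2, _ =>
      show (2 : Polynomial ℚ) * X = _
      simp [Finset.sum_range_succ]
      norm_num [Nat.choose_eq_zero_of_lt, map_ofNat]
    | 3, _ =>
      show (X : Polynomial ℚ) * wpoly X 1 + wpoly X 0 = _
      simp [wpoly, Finset.sum_range_succ]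
      norm_num [Nat.choose_eq_zero_of_lt, map_ofNat]
    | (k+4), _ =>
      have ih1 := ih (k+1) (by omega) (by omega)
      have ih2 := ih (k+2) (by omega) (by omega)
      have step : wpoly (X : Polynomial ℚ) (k+4) = X * wpoly X (k+2) + wpoly X (k+1) := rfl
      set M := 2 * (k+1) / 3 + 1 with hM
      rw [step, ih1, ih2]
      rw [sum_eq_gsum (k+4) (M+2) (by omega), sum_eq_gsum (k+2) (M+1) (by omega),
          sum_eq_gsum (k+1) M (by omega)]
      rw [Finset.sum_range_succ' (fun j => gterm (k+4) j) (M+1)]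
      rw [Finset.sum_range_succ' (fun j => gterm (k+4) (j+1)) M]
      rw [Finset.sum_range_succ' (fun j => gterm (k+2) j) M]
      rw [gterm_zero (k+4) (by omega), gterm_zero (k+2) (by omega)]
      have hone : gterm (k+4) 1 = 0 := gterm_one (k+1)
      rw [show (0:ℕ)+1 = 1 from rfl, hone]
      simp only [add_zero, mul_add, Finset.mul_sum]
      rw [← Finset.sum_add_distrib]
      refine Finset.sum_congr rfl (fun j _ => ?_)
      have hrec := gterm_rec (k+1) j (by omega)
      rw [show j + 1 + 1 = j + 2 from rfl, show k + 1 + 3 = k + 4 from rfl] at hrec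
      rw [hrec]
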